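/- arXiv:2211.06358 — 7 statements merged into one kernel-verified Lean document; each statement's English description precedes it below -/
import Mathlib

section
/- In the hint-interval model with v_t ≡ 1 for all t, there is a universal constant c > 0 (independent of T and L) such that for every horizon T ≥ 1, every L ∈ [1, T], every q ∈ [1, ∞), and every policy π, there exists an admissible (possibly random) sequence {m_t, h_t, σ_t} with E[|h_t − m_t|^q] ≤ σ_t^q for all t and Σ_{t=1}^T σ_t ≤ L such that Reg(π) ≥ c·√(T^{1/(q+1)} · L^{q/(q+1)}). -/
/-!
Take values `v_t ≡ 1`, the uninformative hint `h_t ≡ 1/2` with accuracy `σ_t = L/T`, and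
competing bids `m_t = 1/2 + Δ ξ_t` with `ξ_t` i.i.d. Bernoulli `θ`. The bid at round `t` cannot
depend on `ξ_t`, so its expected reward is at most `(1 - θ)/2 + (θ/2 - Δ) P(b_t ≥ 1/2 + Δ)`.
For `θ = 2Δ + η` the constant bid `1/2 + Δ` is optimal, for `θ = 2Δ - η` the bid `1/2` is, and
each round spent on the wrong side costs `η/2`. When `T η² ≲ Δ` the two laws of `(ξ_t)` are at
total variation distance at most `1/2`, so one of the two instances has regret `≳ T η ≈ √(T Δ)`.
Admissibility requires `θ Δ^q ≤ (L/T)^q`, which allows `Δ ≈ (L/T)^(q/(q+1))`, and then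
`T Δ ≈ T^(1/(q+1)) L^(q/(q+1))`.
-/

noncomputable section

/-- Reward of bidding `b` in a first-price auction with private value `v` and
others' highest bid `m`: the bidder wins iff `b ≥ m`, paying her bid. -/
def reward (v b m : ℝ) : ℝ := if m ≤ b then v - b else 0

/-- The oracle class `F`: nondecreasing 1-Lipschitz functions from `[0,1]` to `[0,1]`. -/
def IsOracle (a : ℝ → ℝ) : Prop :=
  MonotoneOn a (Set.Icc 0 1) ∧ LipschitzOnWith 1 a (Set.Icc 0 1) ∧
    Set.MapsTo a (Set.Icc 0 1) (Set.Icc 0 1)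

/-- An environment for `T` rounds of repeated first-price auctions: a probability
space carrying the (jointly random) others' highest bids `m t` and hints `h t`,
together with deterministic private values `v t` and hint accuracies `σ t`. -/
structure Env (T : ℕ) where
  Ω : Type
  [ms : MeasurableSpace Ω]
  μ : MeasureTheory.Measure Ω
  prob : MeasureTheory.IsProbabilityMeasure μ
  v : Fin T → ℝ
  m : Fin T → Ω → ℝ
  h : Fin T → Ω → ℝ
  σ : Fin T → ℝ
  v_mem : ∀ t, v t ∈ Set.Icc (0 : ℝ) 1
  m_mem : ∀ t ω, m t ω ∈ Set.Icc (0 : ℝ) 1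
  h_mem : ∀ t ω, h t ω ∈ Set.Icc (0 : ℝ) 1
  σ_mem : ∀ t, σ t ∈ Set.Icc (0 : ℝ) 1
  m_meas : ∀ t, Measurable (m t)
  h_meas : ∀ t, Measurable (h t)

/-- A randomized bidding policy in the hint-interval model: at round `t` the bid may
depend on the private values `v_1,…,v_t`, the hints `h_1,…,h_t`, the accuracies
`σ_1,…,σ_t`, the past highest bids `m_1,…,m_{t−1}`, and internal randomness `ω`. -/
structure Policy (T : ℕ) where
  Ω : Type
  [ms : MeasurableSpace Ω]
  μ : MeasureTheory.Measure Ω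
  prob : MeasureTheory.IsProbabilityMeasure μ
  bid : Fin T → (Fin T → ℝ) → (Fin T → ℝ) → (Fin T → ℝ) → (Fin T → ℝ) → Ω → ℝ
  bid_mem : ∀ t v h σ m ω, bid t v h σ m ω ∈ Set.Icc (0 : ℝ) 1
  bid_meas : ∀ t v h σ m, Measurable fun ω => bid t v h σ m ω
  adapted : ∀ (t : Fin T) (v v' h h' σ σ' m m' : Fin T → ℝ) (ω : Ω),
    (∀ s, s ≤ t → v s = v' s) → (∀ s, s ≤ t → h s = h' s) → (∀ s, s ≤ t → σ s = σ' s) →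
    (∀ s, s < t → m s = m' s) →
    bid t v h σ m ω = bid t v' h' σ' m' ω

open MeasureTheory

/-- The admissibility condition `E[|h_t − m_t|^q] ≤ σ_t^q` for every round `t`. -/
def Admissible {T : ℕ} (env : Env T) (q : ℝ) : Prop :=
  letI := env.ms
  ∀ t, (∫ ω, |env.h t ω - env.m t ω| ^ q ∂env.μ) ≤ (env.σ t) ^ q

/-- Expected cumulative reward of a policy in a given environment (expectation over
both the environment randomness and the policy's internal randomness). -/
def policyGain {T : ℕ} (π : Policy T) (env : Env T) : ℝ :=
  letI := env.ms
  letI := π.ms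
  ∑ t : Fin T, ∫ ω : env.Ω × π.Ω,
    reward (env.v t)
      (π.bid t env.v (fun s => env.h s ω.1) env.σ (fun s => env.m s ω.1) ω.2)
      (env.m t ω.1) ∂(env.μ.prod π.μ)

/-- Expected cumulative reward of an oracle `a : [0,1] → [0,1]`. -/
def oracleGain {T : ℕ} (a : ℝ → ℝ) (env : Env T) : ℝ :=
  letI := env.ms
  ∑ t : Fin T, ∫ ω, reward (env.v t) (a (env.v t)) (env.m t ω) ∂env.μ

/-- Regret of a policy: best oracle cumulative expected reward minus the policy's
cumulative expected reward. -/
def Regret {T : ℕ} (π : Policy T) (env : Env T) : ℝ :=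
  (⨆ a : {a : ℝ → ℝ // IsOracle a}, oracleGain a.1 env) - policyGain π env

open Finset Function

attribute [local instance] Policy.ms Policy.prob Env.ms Env.prob

section BernoulliWeight

variable {ι : Type*} [Fintype ι]

def bernWeight (θ : ℝ) (x : ι → Bool) : ℝ := ∏ i, if x i then θ else 1 - θ

lemma bernWeight_nonneg {θ : ℝ} (hθ : θ ∈ Set.Icc 0 1) (x : ι → Bool) : 0 ≤ bernWeight θ x :=
  prod_nonneg fun i _ => by split <;> linarith [hθ.1, hθ.2]

variable [DecidableEq ι]

lemma sum_prod_apply_bool (f : ι → Bool → ℝ) :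
    ∑ x : ι → Bool, ∏ i, f i (x i) = ∏ i, (f i true + f i false) := by
  simp only [← Fintype.sum_bool, Fintype.prod_sum]

lemma sum_bernWeight (θ : ℝ) : ∑ x : ι → Bool, bernWeight θ x = 1 := by
  simp [bernWeight, sum_prod_apply_bool (fun _ b => if b then θ else 1 - θ)]

lemma sum_sqrt_bernWeight_mul {θ θ' : ℝ} (hθ : θ ∈ Set.Icc 0 1) (hθ' : θ' ∈ Set.Icc 0 1) :
    ∑ x : ι → Bool, √(bernWeight θ x * bernWeight θ' x) =
      (√(θ * θ') + √((1 - θ) * (1 - θ'))) ^ Fintype.card ι := by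
  have hprod (x : ι → Bool) : √(bernWeight θ x * bernWeight θ' x) =
      ∏ i, √((if x i then θ else 1 - θ) * (if x i then θ' else 1 - θ')) := by
    rw [bernWeight, bernWeight, ← prod_mul_distrib, Real.sqrt_prod]
    intro i _
    split <;> nlinarith [hθ.1, hθ.2, hθ'.1, hθ'.2]
  simp only [hprod, sum_prod_apply_bool (fun _ b => √((if b then θ else 1 - θ) *
    (if b then θ' else 1 - θ'))), if_true, Bool.false_eq_true, if_false, prod_const, card_univ]

/-- Flipping coordinate `i` pairs each summand with one whose weight differs only in the
`i`-th factor, and the two factors add up to `1`. -/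
lemma sum_bernWeight_mul_ite (θ : ℝ) (i : ι) {F G : (ι → Bool) → ℝ}
    (hF : ∀ x b, F (update x i b) = F x) (hG : ∀ x b, G (update x i b) = G x) :
    ∑ x, bernWeight θ x * (if x i then F x else G x) =
      ∑ x, bernWeight θ x * (θ * F x + (1 - θ) * G x) := by
  set flip : (ι → Bool) → ι → Bool := fun x => update x i (!x i)
  have hflip : Involutive flip := fun x => by simp [flip]
  set rest : (ι → Bool) → ℝ := fun x => ∏ j ∈ univ.erase i, if x j then θ else 1 - θ
  have hrest (x : ι → Bool) : rest (flip x) = rest x :=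
    prod_congr rfl fun j hj => by simp [flip, update_of_ne (ne_of_mem_erase hj)]
  have hweight (x : ι → Bool) : bernWeight θ x = (if x i then θ else 1 - θ) * rest x :=
    (mul_prod_erase _ _ (mem_univ i)).symm
  set f : (ι → Bool) → ℝ := fun x => bernWeight θ x * (if x i then F x else G x)
  set g : (ι → Bool) → ℝ := fun x => bernWeight θ x * (θ * F x + (1 - θ) * G x)
  have hpair (x : ι → Bool) : f x + f (flip x) = g x + g (flip x) := by
    simp only [f, g, hweight, hrest]
    simp only [flip, hF, hG, update_self]
    cases x i <;> simp <;> ring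
  have hsum := sum_congr rfl fun x (_ : x ∈ univ) => hpair x
  have hf := Equiv.sum_comp (hflip.toPerm flip) f
  have hg := Equiv.sum_comp (hflip.toPerm flip) g
  simp only [Involutive.coe_toPerm] at hf hg
  rw [sum_add_distrib, sum_add_distrib, hf, hg] at hsum
  linarith

end BernoulliWeight

section TotalVariation

variable {α : Type*} [Fintype α]

lemma sum_sub_mul_le_sum_max_sub_zero (p q f : α → ℝ) (hf : ∀ x, f x ∈ Set.Icc 0 1) :
    ∑ x, (p x - q x) * f x ≤ ∑ x, max (p x - q x) 0 := by
  refine sum_le_sum fun x _ => ?_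
  obtain ⟨hf0, hf1⟩ := hf x
  rcases le_total 0 (p x - q x) with h | h
  · exact (mul_le_of_le_one_right h hf1).trans (le_max_left _ _)
  · exact (mul_nonpos_of_nonpos_of_nonneg h hf0).trans (le_max_right _ _)

/-- Le Cam's inequality: Cauchy–Schwarz applied to `|p - q| = |√p - √q| (√p + √q)`. -/
theorem sum_max_sub_zero_le_sqrt {p q : α → ℝ} (hp : ∀ x, 0 ≤ p x) (hq : ∀ x, 0 ≤ q x)
    (hp1 : ∑ x, p x = 1) (hq1 : ∑ x, q x = 1) :
    ∑ x, max (p x - q x) 0 ≤ √(1 - (∑ x, √(p x * q x)) ^ 2) := by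
  set ρ := ∑ x, √(p x * q x)
  have hρ : ρ = ∑ x, √(p x) * √(q x) := sum_congr rfl fun x _ => Real.sqrt_mul (hp x) _
  have hmax (x : α) :
      max (p x - q x) 0 = (p x - q x + |√(p x) - √(q x)| * (√(p x) + √(q x))) / 2 := by
    have hpq : p x - q x = (√(p x) - √(q x)) * (√(p x) + √(q x)) := by
      linear_combination (Real.sq_sqrt (hp x)).symm - (Real.sq_sqrt (hq x)).symm
    rw [← abs_of_nonneg (add_nonneg (Real.sqrt_nonneg (p x)) (Real.sqrt_nonneg (q x))), ← abs_mul,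
      ← hpq]
    rcases le_total 0 (p x - q x) with h | h
    · rw [max_eq_left h, abs_of_nonneg h]; ring
    · rw [max_eq_right h, abs_of_nonpos h]; ring
  have hcs := sum_mul_sq_le_sq_mul_sq univ (fun x => |√(p x) - √(q x)|) (fun x => √(p x) + √(q x))
  have hsub : ∑ x, |√(p x) - √(q x)| ^ 2 = 2 - 2 * ρ := by
    simp only [sq_abs, sub_sq, Real.sq_sqrt (hp _), Real.sq_sqrt (hq _), sum_add_distrib,
      sum_sub_distrib, hp1, hq1, hρ, mul_assoc, ← mul_sum]
    ring
  have hadd : ∑ x, (√(p x) + √(q x)) ^ 2 = 2 + 2 * ρ := by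
    simp only [add_sq, Real.sq_sqrt (hp _), Real.sq_sqrt (hq _), sum_add_distrib, hp1, hq1, hρ,
      mul_assoc, ← mul_sum]
    ring
  rw [sum_congr rfl fun x _ => hmax x, ← sum_div, sum_add_distrib, sum_sub_distrib, hp1, hq1,
    sub_self, zero_add]
  refine le_trans (le_abs_self _) (Real.abs_le_sqrt ?_)
  rw [hsub, hadd] at hcs
  nlinarith

lemma sub_div_le_sqrt_sq_sub {a b : ℝ} (ha : 0 < a) (hb : 0 ≤ b) (hba : b ≤ a ^ 2) :
    a - b / a ≤ √(a ^ 2 - b) := by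
  set u := b / a
  have hb_eq : b = u * a := (div_mul_cancel₀ b ha.ne').symm
  have hu : 0 ≤ u := div_nonneg hb ha.le
  have hua : u ≤ a := by nlinarith
  rw [Real.le_sqrt (by linarith) (by linarith)]
  nlinarith

end TotalVariation

/-- The Bhattacharyya coefficient of the two product measures is `r ^ n` with
`r ≥ 1 - η² / (c (1 - c))`, so Bernoulli's inequality keeps it above `7 / 8`. -/
theorem sum_max_bernWeight_sub_zero_le_half {ι : Type*} [Fintype ι] [DecidableEq ι]
    {c η : ℝ} (hc : 0 < c) (hc1 : c < 1) (hη : 0 ≤ η) (hηc : η ≤ c) (hηc' : η ≤ 1 - c)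
    (hn : Fintype.card ι * η ^ 2 ≤ c * (1 - c) / 8) :
    ∑ x : ι → Bool, max (bernWeight (c + η) x - bernWeight (c - η) x) 0 ≤ 1 / 2 := by
  have hplus : c + η ∈ Set.Icc (0 : ℝ) 1 := ⟨by linarith, by linarith⟩
  have hminus : c - η ∈ Set.Icc (0 : ℝ) 1 := ⟨by linarith, by linarith⟩
  refine (sum_max_sub_zero_le_sqrt (bernWeight_nonneg hplus) (bernWeight_nonneg hminus)
    (sum_bernWeight _) (sum_bernWeight _)).trans ?_
  rw [sum_sqrt_bernWeight_mul hplus hminus]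
  set r := √((c + η) * (c - η)) + √((1 - (c + η)) * (1 - (c - η)))
  set δ := η ^ 2 / (c * (1 - c))
  have hc1' : 0 < 1 - c := by linarith
  have hr : 1 - δ ≤ r := by
    have h1 := sub_div_le_sqrt_sq_sub hc (sq_nonneg η) (pow_le_pow_left₀ hη hηc 2)
    have h2 := sub_div_le_sqrt_sq_sub hc1' (sq_nonneg η) (pow_le_pow_left₀ hη hηc' 2)
    rw [show c ^ 2 - η ^ 2 = (c + η) * (c - η) by ring] at h1
    rw [show (1 - c) ^ 2 - η ^ 2 = (1 - (c + η)) * (1 - (c - η)) by ring] at h2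
    have hδ : δ = η ^ 2 / c + η ^ 2 / (1 - c) := by
      simp only [δ]; field_simp; ring
    linarith
  have hδ0 : 0 ≤ δ := by positivity
  have hδ1 : δ ≤ 1 := by
    rw [div_le_one (by positivity), sq]
    exact mul_le_mul hηc hηc' hη hc.le
  have hnδ : Fintype.card ι * δ ≤ 1 / 8 := by
    rw [← mul_div_assoc, div_le_iff₀ (by positivity)]
    linarith
  have hpow : 7 / 8 ≤ r ^ Fintype.card ι :=
    calc 7 / 8 ≤ 1 + Fintype.card ι * (-δ) := by linarith
      _ ≤ (1 + -δ) ^ Fintype.card ι := one_add_mul_le_pow (by linarith) _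
      _ ≤ r ^ Fintype.card ι := pow_le_pow_left₀ (by linarith) (by linarith) _
  rw [Real.sqrt_le_left (by norm_num)]
  nlinarith

section Auction

lemma abs_reward_le_one {v b m : ℝ} (hv : v ∈ Set.Icc 0 1) (hb : b ∈ Set.Icc 0 1) :
    |reward v b m| ≤ 1 := by
  obtain ⟨hv0, hv1⟩ := hv
  obtain ⟨hb0, hb1⟩ := hb
  unfold reward
  split <;> rw [abs_le] <;> constructor <;> linarith

lemma measurable_reward (v m : ℝ) : Measurable fun b => reward v b m :=
  Measurable.ite (measurableSet_le measurable_const measurable_id)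
    (measurable_const.sub measurable_id) measurable_const

lemma isOracle_const {b : ℝ} (hb : b ∈ Set.Icc 0 1) : IsOracle fun _ => b :=
  ⟨monotoneOn_const, fun x _ y _ => by simp, fun _ _ => hb⟩

lemma integrable_reward_comp {Ω : Type*} [MeasurableSpace Ω] {μ : Measure Ω} [IsFiniteMeasure μ]
    {f : Ω → ℝ} (hf : Measurable f) (hf1 : ∀ ω, f ω ∈ Set.Icc 0 1) (m : ℝ) :
    Integrable (fun ω => reward 1 (f ω) m) μ :=
  .of_bound ((measurable_reward 1 m).comp hf).aestronglyMeasurable 1 <|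
    ae_of_all _ fun ω => abs_reward_le_one (by norm_num) (hf1 ω)

variable {T : ℕ}

lemma oracleGain_le_card (env : Env T) {a : ℝ → ℝ} (ha : IsOracle a) : oracleGain a env ≤ T := by
  have hround (t : Fin T) : ∫ ω, reward (env.v t) (a (env.v t)) (env.m t ω) ∂env.μ ≤ 1 := by
    have := norm_integral_le_of_norm_le_const (μ := env.μ) (C := 1)
      (f := fun ω => reward (env.v t) (a (env.v t)) (env.m t ω)) <| ae_of_all _ fun ω =>
        abs_reward_le_one (env.v_mem t) (ha.2.2 (env.v_mem t))
    exact (le_abs_self _).trans (by simpa using this)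
  calc oracleGain a env ≤ ∑ _t : Fin T, (1 : ℝ) := sum_le_sum fun t _ => hround t
    _ = T := by simp

lemma oracleGain_sub_policyGain_le_regret (π : Policy T) (env : Env T) {a : ℝ → ℝ}
    (ha : IsOracle a) : oracleGain a env - policyGain π env ≤ Regret π env := by
  refine sub_le_sub_right (le_ciSup (f := fun a : {a // IsOracle a} => oracleGain a.1 env)
    ⟨T, ?_⟩ ⟨a, ha⟩) _
  rintro _ ⟨a, rfl⟩
  exact oracleGain_le_card env a.2

end Auction

section HardInstance

variable {ι : Type*} [Fintype ι] [DecidableEq ι]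

def bernPMF (θ : ℝ) (hθ : θ ∈ Set.Icc 0 1) : PMF (ι → Bool) :=
  PMF.ofFintype (fun x => ENNReal.ofReal (bernWeight θ x)) <| by
    rw [← ENNReal.ofReal_sum_of_nonneg fun x _ => bernWeight_nonneg hθ x, sum_bernWeight,
      ENNReal.ofReal_one]

lemma integral_bernPMF {θ : ℝ} (hθ : θ ∈ Set.Icc 0 1) (f : (ι → Bool) → ℝ) :
    ∫ x, f x ∂(bernPMF θ hθ).toMeasure = ∑ x, bernWeight θ x * f x := by
  simp [PMF.integral_eq_sum, bernPMF, ENNReal.toReal_ofReal (bernWeight_nonneg hθ _)]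

def twoPoint (Δ : ℝ) (b : Bool) : ℝ := if b then 1 / 2 + Δ else 1 / 2

def meanReward (Δ θ b : ℝ) : ℝ := θ * reward 1 b (1 / 2 + Δ) + (1 - θ) * reward 1 b (1 / 2)

lemma integral_bernPMF_reward_twoPoint {θ : ℝ} (hθ : θ ∈ Set.Icc 0 1) (Δ b : ℝ) (i : ι) :
    ∫ x, reward 1 b (twoPoint Δ (x i)) ∂(bernPMF θ hθ).toMeasure = meanReward Δ θ b := by
  simp only [integral_bernPMF, twoPoint, apply_ite (reward 1 b)]
  rw [sum_bernWeight_mul_ite θ i (fun _ _ => rfl) (fun _ _ => rfl), ← sum_mul, sum_bernWeight,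
    one_mul, meanReward]

lemma meanReward_le {Δ θ b : ℝ} (hΔ : 0 ≤ Δ) (hθ : θ ∈ Set.Icc 0 1) (hb : b ∈ Set.Icc 0 1) :
    meanReward Δ θ b ≤ (1 - θ) / 2 + (θ / 2 - Δ) * (if 1 / 2 + Δ ≤ b then 1 else 0) := by
  obtain ⟨hθ0, hθ1⟩ := hθ
  obtain ⟨hb0, hb1⟩ := hb
  unfold meanReward reward
  split_ifs <;> nlinarith

lemma meanReward_overbid {Δ : ℝ} (hΔ : 0 ≤ Δ) (θ : ℝ) : meanReward Δ θ (1 / 2 + Δ) = 1 / 2 - Δ := by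
  simp only [meanReward, reward, le_refl, if_true]
  rw [if_pos (by linarith)]
  ring

lemma meanReward_half {Δ : ℝ} (hΔ : 0 < Δ) (θ : ℝ) : meanReward Δ θ (1 / 2) = (1 - θ) / 2 := by
  simp only [meanReward, reward, le_refl, if_true]
  rw [if_neg (by linarith)]
  ring

end HardInstance

def hardEnv (T : ℕ) (Δ θ s : ℝ) (hΔ : Δ ∈ Set.Icc 0 (1 / 2)) (hθ : θ ∈ Set.Icc 0 1)
    (hs : s ∈ Set.Icc 0 1) : Env T where
  Ω := Fin T → Bool
  μ := (bernPMF θ hθ).toMeasure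
  prob := inferInstance
  v _ := 1
  m t x := twoPoint Δ (x t)
  h _ _ := 1 / 2
  σ _ := s
  v_mem _ := by norm_num
  m_mem t x := by
    obtain ⟨hΔ0, hΔ1⟩ := hΔ
    unfold twoPoint
    split <;> constructor <;> linarith
  h_mem _ _ := by norm_num
  σ_mem _ := hs
  m_meas _ := .of_discrete
  h_meas _ := measurable_const

variable {T : ℕ}

section HardEnv

variable {Δ θ s : ℝ} (hΔ : Δ ∈ Set.Icc 0 (1 / 2)) (hθ : θ ∈ Set.Icc 0 1) (hs : s ∈ Set.Icc 0 1)

lemma admissible_hardEnv {q : ℝ} (hq : 0 < q) (hθq : θ * Δ ^ q ≤ s ^ q) :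
    Admissible (hardEnv T Δ θ s hΔ hθ hs) q := by
  intro t
  change ∫ x, |1 / 2 - twoPoint Δ (x t)| ^ q ∂(bernPMF θ hθ).toMeasure ≤ s ^ q
  simp only [integral_bernPMF, twoPoint, apply_ite (fun m : ℝ => |1 / 2 - m| ^ q), sub_self,
    sub_add_cancel_left, abs_neg, abs_zero, Real.zero_rpow hq.ne', abs_of_nonneg hΔ.1]
  rwa [sum_bernWeight_mul_ite θ t (fun _ _ => rfl) (fun _ _ => rfl), ← sum_mul, sum_bernWeight,
    one_mul, mul_zero, add_zero]

lemma oracleGain_const_hardEnv (b : ℝ) :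
    oracleGain (fun _ => b) (hardEnv T Δ θ s hΔ hθ hs) = T * meanReward Δ θ b := by
  change ∑ t : Fin T, ∫ x, reward 1 b (twoPoint Δ (x t)) ∂(bernPMF θ hθ).toMeasure = _
  simp [integral_bernPMF_reward_twoPoint]

end HardEnv

section HardBid

variable (π : Policy T) (Δ s : ℝ)

def hardBid (t : Fin T) (x : Fin T → Bool) (ω : π.Ω) : ℝ :=
  π.bid t (fun _ => 1) (fun _ => 1 / 2) (fun _ => s) (fun u => twoPoint Δ (x u)) ω

lemma hardBid_update (t : Fin T) (x : Fin T → Bool) (b : Bool) :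
    hardBid π Δ s t (update x t b) = hardBid π Δ s t x :=
  funext fun ω => π.adapted t _ _ _ _ _ _ _ _ ω (fun _ _ => rfl) (fun _ _ => rfl)
    (fun _ _ => rfl) fun u hu => by rw [update_of_ne hu.ne]

lemma measurable_hardBid (t : Fin T) (x : Fin T → Bool) : Measurable (hardBid π Δ s t x) :=
  π.bid_meas _ _ _ _ _

lemma integrable_reward_hardBid (t : Fin T) (x : Fin T → Bool) (m : ℝ) :
    Integrable (fun ω => reward 1 (hardBid π Δ s t x ω) m) π.μ :=
  integrable_reward_comp (measurable_hardBid π Δ s t x) (fun _ => π.bid_mem _ _ _ _ _ _) m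

def condOverbidProb (t : Fin T) (x : Fin T → Bool) : ℝ :=
  ∫ ω, (if 1 / 2 + Δ ≤ hardBid π Δ s t x ω then 1 else 0) ∂π.μ

def overbidProb (θ : ℝ) (t : Fin T) : ℝ := ∑ x, bernWeight θ x * condOverbidProb π Δ s t x

lemma integrable_overbid (t : Fin T) (x : Fin T → Bool) :
    Integrable (fun ω => if 1 / 2 + Δ ≤ hardBid π Δ s t x ω then (1 : ℝ) else 0) π.μ :=
  .of_bound (Measurable.ite (measurableSet_le measurable_const (measurable_hardBid π Δ s t x))
      measurable_const measurable_const).aestronglyMeasurable 1 <|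
    ae_of_all _ fun ω => by split <;> norm_num

lemma condOverbidProb_mem (t : Fin T) (x : Fin T → Bool) :
    condOverbidProb π Δ s t x ∈ Set.Icc 0 1 := by
  unfold condOverbidProb
  refine ⟨integral_nonneg fun ω => by split <;> norm_num, ?_⟩
  have := norm_integral_le_of_norm_le_const (μ := π.μ) (C := 1)
    (f := fun ω => if 1 / 2 + Δ ≤ hardBid π Δ s t x ω then (1 : ℝ) else 0) <|
      ae_of_all _ fun ω => by split <;> norm_num
  exact (le_abs_self _).trans (by simpa using this)

lemma integral_meanReward_hardBid_le {θ : ℝ} (hΔ : 0 ≤ Δ) (hθ : θ ∈ Set.Icc 0 1) (t : Fin T)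
    (x : Fin T → Bool) :
    ∫ ω, meanReward Δ θ (hardBid π Δ s t x ω) ∂π.μ ≤
      (1 - θ) / 2 + (θ / 2 - Δ) * condOverbidProb π Δ s t x := by
  have hoverbid := (integrable_overbid π Δ s t x).const_mul (θ / 2 - Δ)
  calc ∫ ω, meanReward Δ θ (hardBid π Δ s t x ω) ∂π.μ
      ≤ ∫ ω, ((1 - θ) / 2 + (θ / 2 - Δ) *
          (if 1 / 2 + Δ ≤ hardBid π Δ s t x ω then 1 else 0)) ∂π.μ :=
        integral_mono (((integrable_reward_hardBid π Δ s t x _).const_mul θ).add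
          ((integrable_reward_hardBid π Δ s t x _).const_mul (1 - θ)))
          ((integrable_const _).add hoverbid)
          fun ω => meanReward_le hΔ hθ (π.bid_mem _ _ _ _ _ _)
    _ = (1 - θ) / 2 + (θ / 2 - Δ) * condOverbidProb π Δ s t x := by
        rw [integral_add (integrable_const _) hoverbid, integral_const, integral_const_mul,
          probReal_univ, one_smul, condOverbidProb]

end HardBid

section HardEnvPolicy

variable (π : Policy T) {Δ θ s : ℝ} (hΔ : Δ ∈ Set.Icc 0 (1 / 2)) (hθ : θ ∈ Set.Icc 0 1)
  (hs : s ∈ Set.Icc 0 1)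

lemma integral_reward_hardBid (t : Fin T) :
    ∫ ω : (Fin T → Bool) × π.Ω, reward 1 (hardBid π Δ s t ω.1 ω.2) (twoPoint Δ (ω.1 t))
        ∂(bernPMF θ hθ).toMeasure.prod π.μ =
      ∑ x, bernWeight θ x * ∫ ω, meanReward Δ θ (hardBid π Δ s t x ω) ∂π.μ := by
  have hint : Integrable (fun ω : (Fin T → Bool) × π.Ω =>
      reward 1 (hardBid π Δ s t ω.1 ω.2) (twoPoint Δ (ω.1 t)))
      ((bernPMF θ hθ).toMeasure.prod π.μ) :=
    .of_bound (measurable_from_prod_countable_right fun x =>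
        (measurable_reward 1 (twoPoint Δ (x t))).comp
          (measurable_hardBid π Δ s t x)).aestronglyMeasurable 1 <|
      ae_of_all _ fun ω => abs_reward_le_one (by norm_num) (π.bid_mem _ _ _ _ _ _)
  set F : (Fin T → Bool) → ℝ := fun x => ∫ ω, reward 1 (hardBid π Δ s t x ω) (1 / 2 + Δ) ∂π.μ
  set G : (Fin T → Bool) → ℝ := fun x => ∫ ω, reward 1 (hardBid π Δ s t x ω) (1 / 2) ∂π.μ
  have hsplit (x : Fin T → Bool) :
      ∫ ω, reward 1 (hardBid π Δ s t x ω) (twoPoint Δ (x t)) ∂π.μ = if x t then F x else G x := by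
    unfold twoPoint
    split <;> rfl
  have hmean (x : Fin T → Bool) :
      θ * F x + (1 - θ) * G x = ∫ ω, meanReward Δ θ (hardBid π Δ s t x ω) ∂π.μ := by
    simp only [F, G, meanReward]
    rw [integral_add ((integrable_reward_hardBid π Δ s t x _).const_mul θ)
      ((integrable_reward_hardBid π Δ s t x _).const_mul (1 - θ)), integral_const_mul,
      integral_const_mul]
  rw [integral_prod _ hint, integral_bernPMF]
  simp only [hsplit]
  rw [sum_bernWeight_mul_ite θ t (fun x b => by simp only [F, hardBid_update])
    (fun x b => by simp only [G, hardBid_update])]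
  simp only [hmean]

lemma policyGain_hardEnv_le :
    policyGain π (hardEnv T Δ θ s hΔ hθ hs) ≤
      T * ((1 - θ) / 2) + (θ / 2 - Δ) * ∑ t, overbidProb π Δ s θ t := by
  change ∑ t : Fin T, ∫ ω : (Fin T → Bool) × π.Ω,
      reward 1 (hardBid π Δ s t ω.1 ω.2) (twoPoint Δ (ω.1 t))
        ∂(bernPMF θ hθ).toMeasure.prod π.μ ≤ _
  simp only [integral_reward_hardBid]
  calc ∑ t : Fin T, ∑ x, bernWeight θ x * ∫ ω, meanReward Δ θ (hardBid π Δ s t x ω) ∂π.μ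
      ≤ ∑ t : Fin T, ∑ x, bernWeight θ x *
          ((1 - θ) / 2 + (θ / 2 - Δ) * condOverbidProb π Δ s t x) :=
        sum_le_sum fun t _ => sum_le_sum fun x _ => mul_le_mul_of_nonneg_left
          (integral_meanReward_hardBid_le π Δ s hΔ.1 hθ t x) (bernWeight_nonneg hθ x)
    _ = T * ((1 - θ) / 2) + (θ / 2 - Δ) * ∑ t, overbidProb π Δ s θ t := by
        simp only [mul_add, sum_add_distrib, ← sum_mul, sum_bernWeight, one_mul, overbidProb,
          mul_left_comm _ (θ / 2 - Δ), ← mul_sum, sum_const, card_univ, Fintype.card_fin,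
          nsmul_eq_mul]

lemma regret_hardEnv_ge {b : ℝ} (hb : b ∈ Set.Icc 0 1) :
    T * meanReward Δ θ b - (T * ((1 - θ) / 2) + (θ / 2 - Δ) * ∑ t, overbidProb π Δ s θ t) ≤
      Regret π (hardEnv T Δ θ s hΔ hθ hs) :=
  calc _ ≤ oracleGain (fun _ => b) (hardEnv T Δ θ s hΔ hθ hs) -
        policyGain π (hardEnv T Δ θ s hΔ hθ hs) := by
        rw [oracleGain_const_hardEnv]
        exact sub_le_sub_left (policyGain_hardEnv_le π hΔ hθ hs) _
    _ ≤ _ := oracleGain_sub_policyGain_le_regret π _ (isOracle_const hb)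

end HardEnvPolicy

lemma sum_overbidProb_sub_le (π : Policy T) (Δ s : ℝ) {c η : ℝ} (hc : 0 < c) (hc1 : c < 1)
    (hη : 0 ≤ η) (hηc : η ≤ c) (hηc' : η ≤ 1 - c) (hT : T * η ^ 2 ≤ c * (1 - c) / 8) :
    ∑ t, overbidProb π Δ s (c + η) t - ∑ t, overbidProb π Δ s (c - η) t ≤ T / 2 := by
  have hround (t : Fin T) : overbidProb π Δ s (c + η) t - overbidProb π Δ s (c - η) t ≤ 1 / 2 := by
    rw [overbidProb, overbidProb, ← sum_sub_distrib]
    simp only [← sub_mul]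
    exact (sum_sub_mul_le_sum_max_sub_zero _ _ _ (condOverbidProb_mem π Δ s t)).trans
      (sum_max_bernWeight_sub_zero_le_half hc hc1 hη hηc hηc' (by simpa using hT))
  calc _ = ∑ t, (overbidProb π Δ s (c + η) t - overbidProb π Δ s (c - η) t) :=
        (sum_sub_distrib _ _).symm
    _ ≤ ∑ _t : Fin T, (1 / 2 : ℝ) := sum_le_sum fun t _ => hround t
    _ = T / 2 := by simp [div_eq_mul_inv]

theorem exists_hardEnv_regret_ge (π : Policy T) {Δ η s q : ℝ} (hΔ : 0 < Δ) (hΔ4 : Δ ≤ 1 / 4)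
    (hη : 0 ≤ η) (hηΔ : η ≤ Δ) (hTη : T * η ^ 2 ≤ Δ / 8) (hs : s ∈ Set.Icc 0 1) (hq : 0 < q)
    (hadm : (2 * Δ + η) * Δ ^ q ≤ s ^ q) :
    ∃ env : Env T, env.v = (fun _ => 1) ∧ Admissible env q ∧ ∑ t, env.σ t = T * s ∧
      T * η / 8 ≤ Regret π env := by
  have hΔ' : Δ ∈ Set.Icc 0 (1 / 2) := ⟨hΔ.le, by linarith⟩
  have hplus : 2 * Δ + η ∈ Set.Icc (0 : ℝ) 1 := ⟨by linarith, by linarith⟩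
  have hminus : 2 * Δ - η ∈ Set.Icc (0 : ℝ) 1 := ⟨by linarith, by linarith⟩
  have hσ (θ : ℝ) (hθ : θ ∈ Set.Icc 0 1) : ∑ t, (hardEnv T Δ θ s hΔ' hθ hs).σ t = T * s := by
    simp [hardEnv]
  have hRplus := regret_hardEnv_ge π hΔ' hplus hs (b := 1 / 2 + Δ) ⟨by linarith, by linarith⟩
  have hRminus := regret_hardEnv_ge π hΔ' hminus hs (b := 1 / 2) ⟨by norm_num, by norm_num⟩
  rw [meanReward_overbid hΔ.le] at hRplus
  rw [meanReward_half hΔ] at hRminus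
  have hdiff := sum_overbidProb_sub_le π Δ s (c := 2 * Δ) (by linarith) (by linarith) hη
    (by linarith) (by linarith) (by nlinarith)
  have hsum : T * η / 4 ≤ Regret π (hardEnv T Δ _ s hΔ' hplus hs) +
      Regret π (hardEnv T Δ _ s hΔ' hminus hs) := by
    nlinarith [mul_le_mul_of_nonneg_left hdiff hη]
  obtain h | h : T * η / 8 ≤ Regret π (hardEnv T Δ _ s hΔ' hplus hs) ∨
      T * η / 8 ≤ Regret π (hardEnv T Δ _ s hΔ' hminus hs) := by
    by_contra! h
    linarith [h.1, h.2]
  · exact ⟨_, rfl, admissible_hardEnv hΔ' hplus hs hq hadm, hσ _ _, h⟩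
  · refine ⟨_, rfl, admissible_hardEnv hΔ' hminus hs hq (le_trans ?_ hadm), hσ _ _, h⟩
    gcongr
    linarith

theorem exists_env_regret_ge_sqrt (π : Policy T) {D s q : ℝ} (hD : 0 < D) (hD1 : D ≤ 1)
    (hTD : 1 ≤ T * D) (hs : s ∈ Set.Icc 0 1) (hq : 0 < q) (hDs : D ^ (q + 1) ≤ s ^ q) :
    ∃ env : Env T, env.v = (fun _ => 1) ∧ Admissible env q ∧ ∑ t, env.σ t = T * s ∧
      √(T * D) / 64 ≤ Regret π env := by
  have hT : (0 : ℝ) < T := pos_of_mul_pos_left (one_pos.trans_le hTD) hD.le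
  have hη : √(T * D) / (8 * T) ≤ D / 8 := by
    rw [div_le_div_iff₀ (by positivity) (by norm_num)]
    nlinarith [Real.sqrt_le_self_iff.2 (Or.inr hTD)]
  have hTη : T * (√(T * D) / (8 * T)) ^ 2 = D / 8 / 8 := by
    rw [div_pow, Real.sq_sqrt (by positivity)]
    field_simp
  have hθq : (2 * (D / 8) + √(T * D) / (8 * T)) * (D / 8) ^ q ≤ s ^ q :=
    calc _ ≤ D * D ^ q := by
          gcongr
          · linarith
          · linarith
      _ = D ^ (q + 1) := (Real.rpow_add_one hD.ne' q ▸ mul_comm _ _)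
      _ ≤ s ^ q := hDs
  obtain ⟨env, hv, hadm, hσ, hreg⟩ := exists_hardEnv_regret_ge π (by positivity) (by linarith)
    (by positivity) hη hTη.le hs hq hθq
  refine ⟨env, hv, hadm, hσ, le_of_eq_of_le ?_ hreg⟩
  field_simp
  norm_num

/-- **Theorem 1 (lower bound).** In the hint-interval model with `v_t ≡ 1`, there is a
universal constant `c > 0` such that for every `T ≥ 1`, `L ∈ [1,T]`, `q ∈ [1,∞)` and
every policy `π`, there is an admissible sequence with `E[|h_t − m_t|^q] ≤ σ_t^q` and
`Σ σ_t ≤ L` on which `Reg(π) ≥ c·√(T^{1/(q+1)} · L^{q/(q+1)})`. -/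
theorem thm1_lower :
    ∃ c : ℝ, 0 < c ∧
      ∀ (T : ℕ), 1 ≤ T → ∀ L q : ℝ, 1 ≤ L → L ≤ (T : ℝ) → 1 ≤ q →
        ∀ π : Policy T,
          ∃ env : Env T, env.v = (fun _ => 1) ∧ Admissible env q ∧
            (∑ t : Fin T, env.σ t) ≤ L ∧
            c * Real.sqrt ((T : ℝ) ^ (1 / (q + 1)) * L ^ (q / (q + 1))) ≤ Regret π env := by
  refine ⟨1 / 64, by norm_num, fun T hT L q hL hLT hq π => ?_⟩
  have hT1 : (1 : ℝ) ≤ T := by exact_mod_cast hT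
  have hq1 : q + 1 ≠ 0 := by linarith
  have hLT0 : 0 < L / T := div_pos (by linarith) (by linarith)
  have hs : L / T ∈ Set.Icc 0 1 := ⟨hLT0.le, (div_le_one (by linarith)).2 hLT⟩
  have hX : (T : ℝ) ^ (1 / (q + 1)) * L ^ (q / (q + 1)) = T * (L / T) ^ (q / (q + 1)) := by
    rw [Real.div_rpow (by linarith) (by linarith), show 1 / (q + 1) = 1 - q / (q + 1) by
      field_simp; ring, Real.rpow_sub (by linarith), Real.rpow_one]
    field_simp
  set D := (L / T) ^ (q / (q + 1))
  have hTD : 1 ≤ T * D := hX ▸ one_le_mul_of_one_le_of_one_le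
    (Real.one_le_rpow hT1 (by positivity)) (Real.one_le_rpow hL (by positivity))
  obtain ⟨env, hv, hadm, hσ, hreg⟩ := exists_env_regret_ge_sqrt π (q := q)
    (Real.rpow_pos_of_pos hLT0 _) (Real.rpow_le_one hs.1 hs.2 (by positivity)) hTD hs
    (by linarith) (by rw [← Real.rpow_mul hs.1, div_mul_cancel₀ _ hq1])
  refine ⟨env, hv, hadm, by rw [hσ, mul_div_cancel₀ _ (by linarith)], ?_⟩
  rw [hX]
  linarith
end
end

section
/- Let T ≥ 1 and K ≥ 2, let r_{t,a} ∈ [−1, 1] be arbitrary rewards for t ∈ {1,…,T} and a ∈ {1,…,K}, and suppose there is an expert a* with r_{t,a*} = 0 for all t. Let learning rates satisfy 1/4 ≥ η_1 ≥ η_2 ≥ ⋯ ≥ η_T > 0, and define for each t the multiplicative-weights distribution p_{t,a} = exp(η_t · Σ_{s<t} r_{s,a}) / Σ_{a'=1}^K exp(η_t · Σ_{s<t} r_{s,a'}). Set X̄_t := Σ_{a=1}^K p_{t,a} r_{t,a}, r_t* := max_{a∈[K]} r_{t,a}, and V_T := (log K)/η_T + Σ_{t=1}^T η_t r_t*. Then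 max_{a∈[K]} Σ_{t=1}^T r_{t,a} − Σ_{t=1}^T X̄_t ≤ 2·V_T. -/
/-!
The potential `Φ_t = η_t⁻¹ log (K⁻¹ ∑ₐ exp (η_t S_{t,a}))` of exponential weights, with `S` the
cumulative rewards, is nondecreasing in the learning rate (power-mean inequality), so lowering
`η_{t+1} ≤ η_t` only lowers it, and by `exp (-x) ≤ 1 - x + x²/2` one round raises it by at most
`X̄_t + η_t (r_t* - X̄_t)`. Telescoping and `Φ_T ≥ S_{T,a} - log K / η_T` bound the regret by
`log K / η_T + A` with `A = ∑ η_t (r_t* - X̄_t) ≥ 0`.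
For the zero-reward expert the same bound at each time `t` gives `-∑_{s<t} X̄_s ≤ log K / η_t + A`,
and Abel summation against the nonincreasing `η_t` turns this into
`∑ η_t (-X̄_t) ≤ η_1 (log K / η_T + A) ≤ (log K / η_T + A) / 4`.
As `A = ∑ η_t r_t* + ∑ η_t (-X̄_t)`, this gives `A ≤ (4 ∑ η_t r_t* + log K / η_T) / 3`,
so the regret is at most `(4/3) V_T`.
-/

open Finset

lemma exp_neg_le_one_sub_add_sq_div_two {x : ℝ} (hx : 0 ≤ x) :
    Real.exp (-x) ≤ 1 - x + x ^ 2 / 2 := by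
  -- `(1 - x + x²/2)(1 + x + x²/2) = 1 + x⁴/4 ≥ 1`
  rw [Real.exp_neg, inv_le_iff_one_le_mul₀ (Real.exp_pos x)]
  nlinarith [Real.quadratic_le_exp_of_nonneg hx, sq_nonneg (x ^ 2),
    mul_le_mul_of_nonneg_left (Real.quadratic_le_exp_of_nonneg hx)
      (by nlinarith [sq_nonneg (x - 1)] : (0 : ℝ) ≤ 1 - x + x ^ 2 / 2)]

lemma sum_mul_exp_mul_le_exp {ι : Type*} (s : Finset ι) (p g : ι → ℝ) {η m : ℝ}
    (hp : ∀ i ∈ s, 0 ≤ p i) (hp₁ : ∑ i ∈ s, p i = 1) (hη : 0 ≤ η)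
    (hg : ∀ i ∈ s, g i ≤ m) (hm : ∀ i ∈ s, m - g i ≤ 2) :
    ∑ i ∈ s, p i * Real.exp (η * g i) ≤
      Real.exp (η * ∑ i ∈ s, p i * g i + η ^ 2 * (m - ∑ i ∈ s, p i * g i)) := by
  set X := ∑ i ∈ s, p i * g i
  have hpoint : ∀ i ∈ s,
      Real.exp (η * g i) ≤ Real.exp (η * m) * (1 - (η - η ^ 2) * (m - g i)) := by
    intro i hi
    have hd := sub_nonneg.2 (hg i hi)
    have hq := exp_neg_le_one_sub_add_sq_div_two (mul_nonneg hη hd)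
    rw [show η * g i = η * m + -(η * (m - g i)) by ring, Real.exp_add]
    gcongr
    nlinarith [mul_le_mul_of_nonneg_left (hm i hi) (mul_nonneg (sq_nonneg η) hd)]
  calc ∑ i ∈ s, p i * Real.exp (η * g i)
      ≤ ∑ i ∈ s, p i * (Real.exp (η * m) * (1 - (η - η ^ 2) * (m - g i))) :=
        sum_le_sum fun i hi => mul_le_mul_of_nonneg_left (hpoint i hi) (hp i hi)
    _ = Real.exp (η * m) * (1 + -((η - η ^ 2) * (m - X))) := by
        have hlin : ∀ i, p i * (Real.exp (η * m) * (1 - (η - η ^ 2) * (m - g i))) =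
            Real.exp (η * m) * (1 - (η - η ^ 2) * m) * p i +
              Real.exp (η * m) * (η - η ^ 2) * (p i * g i) := fun i => by ring
        rw [sum_congr rfl fun i _ => hlin i, sum_add_distrib, ← mul_sum, ← mul_sum, hp₁]
        ring
    _ ≤ Real.exp (η * m) * Real.exp (-((η - η ^ 2) * (m - X))) := by
        gcongr; exact Real.add_one_le_exp _ |>.trans_eq' (by ring)
    _ = Real.exp (η * X + η ^ 2 * (m - X)) := by rw [← Real.exp_add]; ring_nf

section LogMeanExp

variable {ι : Type*} [Fintype ι]

noncomputable def softmax (η : ℝ) (f : ι → ℝ) (i : ι) : ℝ :=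
  Real.exp (η * f i) / ∑ j, Real.exp (η * f j)

noncomputable def logMeanExp (η : ℝ) (f : ι → ℝ) : ℝ :=
  Real.log ((∑ i, Real.exp (η * f i)) / Fintype.card ι) / η

lemma sum_exp_mul_pos [Nonempty ι] (η : ℝ) (f : ι → ℝ) : 0 < ∑ i, Real.exp (η * f i) :=
  sum_pos (fun _ _ => Real.exp_pos _) univ_nonempty

lemma softmax_nonneg (η : ℝ) (f : ι → ℝ) (i : ι) : 0 ≤ softmax η f i := by
  unfold softmax; positivity

lemma sum_softmax [Nonempty ι] (η : ℝ) (f : ι → ℝ) : ∑ i, softmax η f i = 1 := by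
  simp only [softmax, ← sum_div, div_self (sum_exp_mul_pos η f).ne']

lemma sum_softmax_mul_le {η : ℝ} {f g : ι → ℝ} {m : ℝ} [Nonempty ι] (hg : ∀ i, g i ≤ m) :
    ∑ i, softmax η f i * g i ≤ m :=
  calc ∑ i, softmax η f i * g i ≤ ∑ i, softmax η f i * m :=
        sum_le_sum fun i _ => mul_le_mul_of_nonneg_left (hg i) (softmax_nonneg η f i)
    _ = m := by rw [← sum_mul, sum_softmax, one_mul]

lemma sum_exp_mul_add [Nonempty ι] (η : ℝ) (f g : ι → ℝ) :
    ∑ i, Real.exp (η * (f + g) i) =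
      (∑ i, Real.exp (η * f i)) * ∑ i, softmax η f i * Real.exp (η * g i) := by
  simp only [softmax, mul_sum, Pi.add_apply, mul_add, Real.exp_add]
  refine sum_congr rfl fun i _ => ?_
  field_simp [(sum_exp_mul_pos η f).ne']

lemma logMeanExp_zero (η : ℝ) : logMeanExp η (0 : ι → ℝ) = 0 := by
  rcases isEmpty_or_nonempty ι with hι | hι
  · simp [logMeanExp]
  · simp [logMeanExp, Fintype.card_ne_zero]

lemma le_logMeanExp {η : ℝ} (hη : 0 < η) (f : ι → ℝ) (i : ι) :
    f i - Real.log (Fintype.card ι) / η ≤ logMeanExp η f := by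
  have : Nonempty ι := ⟨i⟩
  have hK : (0 : ℝ) < Fintype.card ι := by exact_mod_cast Fintype.card_pos
  have hexp : Real.exp (η * f i) ≤ ∑ j, Real.exp (η * f j) :=
    single_le_sum (f := fun j => Real.exp (η * f j)) (fun j _ => (Real.exp_pos _).le) (mem_univ i)
  rw [logMeanExp, Real.log_div (sum_exp_mul_pos η f).ne' hK.ne', sub_div, ← sub_nonneg]
  have := (Real.le_log_iff_exp_le (sum_exp_mul_pos η f)).2 hexp
  rw [← sub_nonneg] at this
  field_simp
  linarith

lemma logMeanExp_le_logMeanExp [Nonempty ι] (f : ι → ℝ) {b a : ℝ} (hb : 0 < b) (hba : b ≤ a) :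
    logMeanExp b f ≤ logMeanExp a f := by
  have ha := hb.trans_le hba
  set w : ι → ℝ := fun _ => (Fintype.card ι : ℝ)⁻¹
  have hmean : ∀ c, (∑ i, Real.exp (c * f i)) / Fintype.card ι = ∑ i, w i * Real.exp (c * f i) :=
    fun c => by simp only [w, ← mul_sum, div_eq_inv_mul]
  have hw : ∑ i, w i = 1 := by simp [w, Fintype.card_ne_zero]
  have hpow := Real.rpow_arith_mean_le_arith_mean_rpow univ w (fun i => Real.exp (b * f i))
    (fun i _ => by positivity) hw (fun i _ => (Real.exp_pos _).le) ((one_le_div hb).2 hba)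
  simp only [← Real.exp_mul, show ∀ i, b * f i * (a / b) = a * f i from
    fun i => by field_simp] at hpow
  have hpos : 0 < ∑ i, w i * Real.exp (b * f i) := sum_pos (fun i _ => by positivity) univ_nonempty
  have hlog := Real.log_le_log (by positivity) hpow
  rw [Real.log_rpow hpos] at hlog
  rw [logMeanExp, logMeanExp, hmean, hmean, div_le_div_iff₀ hb ha]
  rw [div_mul_eq_mul_div, div_le_iff₀ hb] at hlog
  linarith

lemma logMeanExp_add_le [Nonempty ι] {η m : ℝ} (hη : 0 < η) (f g : ι → ℝ)
    (hg : ∀ i, g i ≤ m) (hm : ∀ i, m - g i ≤ 2) :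
    logMeanExp η (f + g) ≤ logMeanExp η f + ∑ i, softmax η f i * g i +
      η * (m - ∑ i, softmax η f i * g i) := by
  set X := ∑ i, softmax η f i * g i
  have hK : (0 : ℝ) < Fintype.card ι := by exact_mod_cast Fintype.card_pos
  have hW := sum_exp_mul_pos η f
  have hQ : 0 < ∑ i, softmax η f i * Real.exp (η * g i) :=
    sum_pos (fun i _ => mul_pos (div_pos (Real.exp_pos _) hW) (Real.exp_pos _)) univ_nonempty
  have hlogQ : Real.log (∑ i, softmax η f i * Real.exp (η * g i)) ≤ η * X + η ^ 2 * (m - X) :=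
    (Real.log_le_iff_le_exp hQ).2 <| sum_mul_exp_mul_le_exp univ _ g
      (fun i _ => softmax_nonneg η f i) (sum_softmax η f) hη.le (fun i _ => hg i) (fun i _ => hm i)
  rw [logMeanExp, logMeanExp, sum_exp_mul_add, mul_div_right_comm,
    Real.log_mul (div_pos hW hK).ne' hQ.ne', add_div]
  have : (η * X + η ^ 2 * (m - X)) / η = X + η * (m - X) := by field_simp
  linarith [div_le_div_of_nonneg_right hlogQ hη.le]

end LogMeanExp

lemma sum_mul_le_of_sum_range_le {η x : ℕ → ℝ} {c D : ℝ} {T : ℕ} (hη : Antitone η)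
    (hη_pos : ∀ t, 0 < η t) (hc : 0 ≤ c)
    (hx : ∀ t ≤ T, ∑ s ∈ range t, x s ≤ c / η t + D) :
    ∑ s ∈ range T, η s * x s ≤ η 0 * (c / η T + D) := by
  -- Abel summation; `c * (η 0 / η n - 1)` absorbs `∑ s < n, (η s - η (s + 1)) * c / η (s + 1)`
  have key : ∀ n ≤ T, ∑ s ∈ range n, η s * x s ≤
      η n * ∑ s ∈ range n, x s + D * (η 0 - η n) + c * (η 0 / η n - 1) := by
    intro n hn
    induction n with
    | zero => simp [div_self (hη_pos 0).ne']
    | succ n ih =>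
      have hn₀ := hη_pos n
      have hn₁ := hη_pos (n + 1)
      have hdrop : 0 ≤ η n - η (n + 1) := sub_nonneg.2 (hη n.le_succ)
      have hY := mul_le_mul_of_nonneg_left (hx (n + 1) hn) hdrop
      have hratio : c * ((η n - η (n + 1)) / η (n + 1)) ≤ c * (η 0 / η (n + 1) - η 0 / η n) := by
        have : η 0 / η (n + 1) - η 0 / η n - (η n - η (n + 1)) / η (n + 1) =
            (η n - η (n + 1)) * (η 0 - η n) / (η n * η (n + 1)) := by field_simp
        have := div_nonneg (mul_nonneg hdrop (sub_nonneg.2 (hη n.zero_le))) (mul_pos hn₀ hn₁).le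
        gcongr; linarith
      have : (η n - η (n + 1)) * (c / η (n + 1)) = c * ((η n - η (n + 1)) / η (n + 1)) := by ring
      rw [sum_range_succ, sum_range_succ] at *
      linarith [ih (by omega)]
  calc ∑ s ∈ range T, η s * x s
      ≤ η T * ∑ s ∈ range T, x s + D * (η 0 - η T) + c * (η 0 / η T - 1) := key T le_rfl
    _ ≤ η T * (c / η T + D) + D * (η 0 - η T) + c * (η 0 / η T - 1) := by
        gcongr; exacts [(hη_pos T).le, hx T le_rfl]
    _ = η 0 * (c / η T + D) := by field_simp [(hη_pos T).ne']; ring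

section Regret

variable {ι : Type*}

def cumReward (r : ℕ → ι → ℝ) (t : ℕ) (a : ι) : ℝ := ∑ s ∈ range t, r s a

variable {r : ℕ → ι → ℝ}

lemma cumReward_zero : cumReward r 0 = 0 := funext fun _ => sum_range_zero _

lemma cumReward_succ (t : ℕ) : cumReward r (t + 1) = cumReward r t + r t :=
  funext fun _ => sum_range_succ _ _

variable [Fintype ι]

noncomputable def expectedReward (r : ℕ → ι → ℝ) (η : ℕ → ℝ) (t : ℕ) : ℝ :=
  ∑ a, softmax (η t) (cumReward r t) a * r t a

variable {η : ℕ → ℝ} {rs : ℕ → ℝ}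

lemma logMeanExp_cumReward_le [Nonempty ι] (hη_pos : ∀ t, 0 < η t) (hη : Antitone η)
    (hr : ∀ t a, r t a ≤ rs t) (hgap : ∀ t a, rs t - r t a ≤ 2) (n : ℕ) :
    logMeanExp (η n) (cumReward r n) ≤
      ∑ t ∈ range n, (expectedReward r η t + η t * (rs t - expectedReward r η t)) := by
  induction n with
  | zero => simp [cumReward_zero, logMeanExp_zero]
  | succ n ih =>
    calc logMeanExp (η (n + 1)) (cumReward r (n + 1))
        ≤ logMeanExp (η n) (cumReward r n + r n) := by
          rw [cumReward_succ]
          exact logMeanExp_le_logMeanExp _ (hη_pos _) (hη n.le_succ)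
      _ ≤ logMeanExp (η n) (cumReward r n) + expectedReward r η n +
            η n * (rs n - expectedReward r η n) :=
          logMeanExp_add_le (hη_pos n) _ _ (hr n) (hgap n)
      _ ≤ _ := by rw [sum_range_succ]; linarith

lemma cumReward_sub_sum_expectedReward_le (hη_pos : ∀ t, 0 < η t) (hη : Antitone η)
    (hr : ∀ t a, r t a ≤ rs t) (hgap : ∀ t a, rs t - r t a ≤ 2) (n : ℕ) (a : ι) :
    cumReward r n a - ∑ t ∈ range n, expectedReward r η t ≤
      Real.log (Fintype.card ι) / η n + ∑ t ∈ range n, η t * (rs t - expectedReward r η t) := by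
  have : Nonempty ι := ⟨a⟩
  have := (le_logMeanExp (hη_pos n) _ a).trans (logMeanExp_cumReward_le hη_pos hη hr hgap n)
  rw [sum_add_distrib] at this
  linarith

theorem cumReward_sub_sum_expectedReward_le_two_mul (hη_pos : ∀ t, 0 < η t) (hη : Antitone η)
    (hη₀ : η 0 ≤ 1 / 4) (hr : ∀ t a, -1 ≤ r t a) (hrs : ∀ t a, r t a ≤ rs t) (hrs₁ : ∀ t, rs t ≤ 1)
    {a₀ : ι} (ha₀ : ∀ t, r t a₀ = 0) (T : ℕ) (a : ι) :
    cumReward r T a - ∑ t ∈ range T, expectedReward r η t ≤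
      2 * (Real.log (Fintype.card ι) / η T + ∑ t ∈ range T, η t * rs t) := by
  have : Nonempty ι := ⟨a₀⟩
  have hgap : ∀ t a, rs t - r t a ≤ 2 := fun t a => by linarith [hr t a, hrs₁ t]
  have hregret := cumReward_sub_sum_expectedReward_le hη_pos hη hrs hgap
  set X := expectedReward r η
  set L := Real.log (Fintype.card ι) / η T
  set A := ∑ t ∈ range T, η t * (rs t - X t)
  have hlogK : 0 ≤ Real.log (Fintype.card ι) := Real.log_natCast_nonneg _
  have hL : 0 ≤ L := div_nonneg hlogK (hη_pos T).le
  have hterm : ∀ t, 0 ≤ η t * (rs t - X t) := fun t =>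
    mul_nonneg (hη_pos t).le (sub_nonneg.2 (sum_softmax_mul_le (hrs t)))
  have hA : 0 ≤ A := sum_nonneg fun t _ => hterm t
  have hR : 0 ≤ ∑ t ∈ range T, η t * rs t :=
    sum_nonneg fun t _ => mul_nonneg (hη_pos t).le (ha₀ t ▸ hrs t a₀)
  have hloss : ∀ t ≤ T, ∑ s ∈ range t, -X s ≤ Real.log (Fintype.card ι) / η t + A := by
    intro t ht
    have hsub : ∑ s ∈ range t, η s * (rs s - X s) ≤ A :=
      sum_le_sum_of_subset_of_nonneg (range_subset_range.2 ht) fun s _ _ => hterm s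
    have := hregret t a₀
    simp only [cumReward, ha₀, sum_const_zero, zero_sub] at this
    rw [sum_neg_distrib]
    linarith
  have hB := sum_mul_le_of_sum_range_le hη hη_pos hlogK hloss
  have hsplit : A = ∑ t ∈ range T, η t * rs t + ∑ t ∈ range T, η t * -X t := by
    rw [← sum_add_distrib]; exact sum_congr rfl fun t _ => by ring
  have hη₀' : η 0 * (L + A) ≤ (L + A) / 4 := by nlinarith
  linarith [hregret T a]

end Regret

section ExtendLast

variable {α : Type*} {T : ℕ} (hT : 0 < T)

def extendLast (f : Fin T → α) (t : ℕ) : α := f ⟨min t (T - 1), by omega⟩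

lemma extendLast_val (f : Fin T → α) (s : Fin T) : extendLast hT f s = f s :=
  congrArg f (Fin.ext (min_eq_left (by omega)))

lemma extendLast_self (f : Fin T → α) : extendLast hT f T = f ⟨T - 1, by omega⟩ :=
  congrArg f (Fin.ext (min_eq_right (by omega)))

lemma Antitone.extendLast [Preorder α] {f : Fin T → α} (hf : Antitone f) :
    Antitone (extendLast hT f) :=
  fun _ _ hst => hf (Fin.mk_le_mk.2 (min_le_min_right _ hst))

lemma cumReward_extendLast {ι : Type*} (r : Fin T → ι → ℝ) (t : Fin T) (a : ι) :
    cumReward (extendLast hT r) t a = ∑ s ∈ univ.filter (· < t), r s a := by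
  rw [cumReward, ← Nat.Iio_eq_range, ← Fin.map_valEmbedding_Iio, sum_map, filter_gt_eq_Iio]
  exact sum_congr rfl fun s _ => congrFun (extendLast_val hT r s) a

end ExtendLast

/-- Deterministic regret bound for multiplicative weights with time-varying
nonincreasing learning rates `1/4 ≥ η_1 ≥ ⋯ ≥ η_T > 0`, rewards `r_{t,a} ∈ [−1,1]`,
and a reference expert `a*` with identically zero reward: with
`p_{t,a} ∝ exp(η_t Σ_{s<t} r_{s,a})`, `X̄_t = Σ_a p_{t,a} r_{t,a}`,
`r_t* = max_a r_{t,a}` and `V_T = (log K)/η_T + Σ_t η_t r_t*`, one has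
`max_a Σ_t r_{t,a} − Σ_t X̄_t ≤ 2 V_T`. -/
theorem mw_regret_bound (T K : ℕ) (hT : 1 ≤ T)
    (r : Fin T → Fin K → ℝ)
    (hr : ∀ t a, r t a ∈ Set.Icc (-1 : ℝ) 1)
    (astar : Fin K) (hstar : ∀ t, r t astar = 0)
    (η : Fin T → ℝ)
    (hη_pos : ∀ t, 0 < η t)
    (hη_le : ∀ t, η t ≤ 1 / 4)
    (hη_mono : ∀ s t : Fin T, s ≤ t → η t ≤ η s)
    (p : Fin T → Fin K → ℝ)
    (hp : ∀ t a, p t a =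
      Real.exp (η t * ∑ s ∈ Finset.univ.filter (fun s => s < t), r s a) /
        ∑ a' : Fin K,
          Real.exp (η t * ∑ s ∈ Finset.univ.filter (fun s => s < t), r s a'))
    (Xbar : Fin T → ℝ) (hX : ∀ t, Xbar t = ∑ a : Fin K, p t a * r t a)
    (rstar : Fin T → ℝ)
    (hrstar : ∀ t, IsGreatest (Set.range (r t)) (rstar t))
    (V : ℝ)
    (hV : V = Real.log K / η ⟨T - 1, by omega⟩ + ∑ t : Fin T, η t * rstar t) :
    (Finset.univ.sup' ⟨astar, Finset.mem_univ astar⟩ fun a => ∑ t : Fin T, r t a)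
      - ∑ t : Fin T, Xbar t ≤ 2 * V := by
  have hXbar : ∀ t : Fin T, Xbar t = expectedReward (extendLast hT r) (extendLast hT η) t :=
    fun t => by simp only [hX, hp, expectedReward, softmax, cumReward_extendLast, extendLast_val]
  have hrstar_le : ∀ t, rstar t ≤ 1 := fun t => by
    obtain ⟨a, ha⟩ := (hrstar t).1
    exact ha ▸ (hr t a).2
  have hbound := cumReward_sub_sum_expectedReward_le_two_mul (r := extendLast hT r)
    (η := extendLast hT η) (rs := extendLast hT rstar)
    (fun _ => hη_pos _) (Antitone.extendLast hT hη_mono) (hη_le _) (fun _ a => (hr _ a).1)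
    (fun _ a => (hrstar _).2 ⟨a, rfl⟩)
    (fun _ => hrstar_le _) (fun _ => hstar _) T
  have hrange : ∀ g : ℕ → ℝ, ∑ t ∈ range T, g t = ∑ t : Fin T, g t :=
    fun g => (Fin.sum_univ_eq_sum_range g T).symm
  rw [sub_le_iff_le_add, hV]
  refine sup'_le _ _ fun a _ => sub_le_iff_le_add.1 ?_
  have := hbound a
  rw [cumReward, hrange, hrange, hrange, extendLast_self, Fintype.card_fin] at this
  simp only [extendLast_val] at this
  simpa only [hXbar] using this
end

section
/- Let X be a real-valued random variable with |X − E[X]| ≤ 1 almost surely, and let λ ≥ 0. Then E[exp(λX)] ≤ exp( λ·E[X] + (e^λ − λ − 1)·Var(X) ). -/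
/-!
Every term of order `n ≥ 2` of the exponential series of `λy` is at most `y²` times the
corresponding term for `λ` when `|y| ≤ 1` and `λ ≥ 0`, so
`exp (λy) ≤ 1 + λy + (e^λ - λ - 1) y²`. Applied to `y = X - E[X]` and integrated, this gives
`E[exp (λ (X - E[X]))] ≤ 1 + (e^λ - λ - 1) Var(X) ≤ exp ((e^λ - λ - 1) Var(X))`.
-/

open MeasureTheory

open Nat in
lemma Real.hasSum_pow_add_two_div_factorial (x : ℝ) :
    HasSum (fun n : ℕ => x ^ (n + 2) / (n + 2)!) (Real.exp x - x - 1) := by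
  have h := (hasSum_nat_add_iff' 2).mpr
    (Real.exp_eq_exp_ℝ ▸ NormedSpace.expSeries_div_hasSum_exp x)
  simpa [Finset.sum_range_succ, sub_add_eq_sub_sub_swap] using h

open Nat in
lemma Real.exp_mul_le_one_add_mul_add_sq {t y : ℝ} (ht : 0 ≤ t) (hy : |y| ≤ 1) :
    Real.exp (t * y) ≤ 1 + t * y + (Real.exp t - t - 1) * y ^ 2 := by
  have hterm : ∀ n : ℕ, (t * y) ^ (n + 2) / (n + 2)! ≤ y ^ 2 * (t ^ (n + 2) / (n + 2)!) := by
    intro n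
    have hpow : y ^ (n + 2) ≤ y ^ 2 :=
      calc y ^ (n + 2) ≤ |y| ^ (n + 2) := (le_abs_self _).trans_eq (abs_pow _ _)
        _ ≤ |y| ^ 2 := pow_le_pow_of_le_one (abs_nonneg _) hy (by omega)
        _ = y ^ 2 := sq_abs _
    rw [mul_pow, mul_div_assoc', mul_comm (y ^ 2)]
    gcongr
  have hrem := hasSum_le hterm (Real.hasSum_pow_add_two_div_factorial (t * y))
    ((Real.hasSum_pow_add_two_div_factorial t).mul_left (y ^ 2))
  linarith

lemma integral_exp_mul_le_of_abs_le_one {Ω : Type*} [MeasurableSpace Ω] {μ : Measure Ω}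
    [IsProbabilityMeasure μ] {Y : Ω → ℝ} (hY : AEMeasurable Y μ)
    (hbdd : ∀ᵐ ω ∂μ, |Y ω| ≤ 1) {t : ℝ} (ht : 0 ≤ t) :
    ∫ ω, Real.exp (t * Y ω) ∂μ ≤
      1 + t * ∫ ω, Y ω ∂μ + (Real.exp t - t - 1) * ∫ ω, Y ω ^ 2 ∂μ := by
  have hY_int : Integrable Y μ := Integrable.of_bound hY.aestronglyMeasurable 1 hbdd
  have hY_sq_int : Integrable (fun ω => Y ω ^ 2) μ :=
    Integrable.of_bound (hY.pow_const 2).aestronglyMeasurable 1 <| by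
      filter_upwards [hbdd] with ω hω
      simpa [abs_pow] using pow_le_one₀ (n := 2) (abs_nonneg _) hω
  have hexp_int : Integrable (fun ω => Real.exp (t * Y ω)) μ :=
    Integrable.of_bound (hY.const_mul t).exp.aestronglyMeasurable (Real.exp t) <| by
      filter_upwards [hbdd] with ω hω
      rw [Real.norm_eq_abs, Real.abs_exp, Real.exp_le_exp]
      nlinarith [le_abs_self (Y ω)]
  have hlin_int : Integrable (fun ω => 1 + t * Y ω) μ :=
    (integrable_const 1).fun_add (hY_int.const_mul t)
  calc ∫ ω, Real.exp (t * Y ω) ∂μ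
      ≤ ∫ ω, (1 + t * Y ω + (Real.exp t - t - 1) * Y ω ^ 2) ∂μ := by
        refine integral_mono_ae hexp_int (hlin_int.fun_add (hY_sq_int.const_mul _)) ?_
        filter_upwards [hbdd] with ω hω
        exact Real.exp_mul_le_one_add_mul_add_sq ht hω
    _ = 1 + t * ∫ ω, Y ω ∂μ + (Real.exp t - t - 1) * ∫ ω, Y ω ^ 2 ∂μ := by
        rw [integral_add hlin_int (hY_sq_int.const_mul _),
          integral_add (integrable_const 1) (hY_int.const_mul t), integral_const_mul,
          integral_const_mul, integral_const]
        simp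

theorem bernstein_mgf_bound_general {Ω : Type*} [MeasurableSpace Ω]
    (μ : Measure Ω) [IsProbabilityMeasure μ]
    (X : Ω → ℝ) (hint : Integrable X μ)
    (hbdd : ∀ᵐ ω ∂μ, |X ω - ∫ ω', X ω' ∂μ| ≤ 1)
    (lam : ℝ) (hlam : 0 ≤ lam) :
    (∫ ω, Real.exp (lam * X ω) ∂μ) ≤
      Real.exp (lam * (∫ ω, X ω ∂μ) +
        (Real.exp lam - lam - 1) * ProbabilityTheory.variance X μ) := by
  set m := ∫ ω, X ω ∂μ
  set c := Real.exp lam - lam - 1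
  have hmean : ∫ ω, (X ω - m) ∂μ = 0 := by
    simp [integral_sub hint (integrable_const m), m]
  have hcentered := integral_exp_mul_le_of_abs_le_one
    (hint.aemeasurable.sub_const m) hbdd hlam
  rw [hmean, ← ProbabilityTheory.variance_eq_integral hint.aemeasurable] at hcentered
  calc ∫ ω, Real.exp (lam * X ω) ∂μ
      = Real.exp (lam * m) * ∫ ω, Real.exp (lam * (X ω - m)) ∂μ := by
        rw [← integral_const_mul]
        congr 1 with ω
        rw [← Real.exp_add]
        ring_nf
    _ ≤ Real.exp (lam * m) * (1 + c * ProbabilityTheory.variance X μ) := by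
        gcongr
        linarith
    _ ≤ Real.exp (lam * m) * Real.exp (c * ProbabilityTheory.variance X μ) := by
        gcongr
        linarith [Real.add_one_le_exp (c * ProbabilityTheory.variance X μ)]
    _ = Real.exp (lam * m + c * ProbabilityTheory.variance X μ) := (Real.exp_add _ _).symm

/-- **Bernstein/Bennett MGF bound.** If `X` is a real random variable with
`|X − E[X]| ≤ 1` almost surely and `λ ≥ 0`, then
`E[exp(λX)] ≤ exp(λ·E[X] + (e^λ − λ − 1)·Var(X))`. -/
theorem bernstein_mgf_bound {Ω : Type*} [MeasurableSpace Ω]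
    (μ : Measure Ω) [IsProbabilityMeasure μ]
    (X : Ω → ℝ) (hmeas : Measurable X) (hint : Integrable X μ)
    (hbdd : ∀ᵐ ω ∂μ, |X ω - ∫ ω', X ω' ∂μ| ≤ 1)
    (lam : ℝ) (hlam : 0 ≤ lam) :
    (∫ ω, Real.exp (lam * X ω) ∂μ) ≤
      Real.exp (lam * (∫ ω, X ω ∂μ) +
        (Real.exp lam - lam - 1) * ProbabilityTheory.variance X μ) :=
  bernstein_mgf_bound_general μ X hint hbdd lam hlam
end

section
/- Let q ∈ [1, ∞) and σ ∈ (0, 1], and let h and m be random variables taking values in [0,1] with E[|h − m|^q] ≤ σ^q. Then P( m > h + σ^{q/(q+1)} ) + E[ |h + σ^{q/(q+1)} − m| ] ≤ 3·σ^{q/(q+1)}. -/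
open MeasureTheory

/-- If `h, m` are `[0,1]`-valued random variables with `E[|h − m|^q] ≤ σ^q` for some
`q ∈ [1,∞)` and `σ ∈ (0,1]`, then
`P(m > h + σ^{q/(q+1)}) + E[|h + σ^{q/(q+1)} − m|] ≤ 3·σ^{q/(q+1)}`. -/
theorem hint_expert_loss_bound {Ω : Type*} [MeasurableSpace Ω]
    (μ : Measure Ω) [IsProbabilityMeasure μ]
    (q σ : ℝ) (hq : 1 ≤ q) (hσ : σ ∈ Set.Ioc (0 : ℝ) 1)
    (h m : Ω → ℝ) (hh : Measurable h) (hm : Measurable m)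
    (hhr : ∀ ω, h ω ∈ Set.Icc (0 : ℝ) 1) (hmr : ∀ ω, m ω ∈ Set.Icc (0 : ℝ) 1)
    (hmom : (∫ ω, |h ω - m ω| ^ q ∂μ) ≤ σ ^ q) :
    (μ {ω | h ω + σ ^ (q / (q + 1)) < m ω}).toReal
      + ∫ ω, |h ω + σ ^ (q / (q + 1)) - m ω| ∂μ
      ≤ 3 * σ ^ (q / (q + 1)) := by
  obtain ⟨hσ0, hσ1⟩ := hσ
  set ε : ℝ := σ ^ (q / (q + 1)) with hε
  have hq0 : 0 < q := lt_of_lt_of_le one_pos hq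
  have hq1 : 0 < q + 1 := by linarith
  have hε0 : 0 < ε := Real.rpow_pos_of_pos hσ0 _
  have hε1 : ε ≤ 1 := Real.rpow_le_one hσ0.le hσ1 (by positivity)
  have hσε : σ ≤ ε := by
    have := Real.rpow_le_rpow_of_exponent_ge hσ0 hσ1
      (show q / (q + 1) ≤ 1 by rw [div_le_one hq1]; linarith)
    simpa [Real.rpow_one] using this
  have hfm : Measurable fun ω => |h ω - m ω| := (hh.sub hm).abs
  have hfb : ∀ ω, |h ω - m ω| ≤ 1 := by
    intro ω
    have h1 := hhr ω; have h2 := hmr ω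
    rw [abs_le]
    constructor <;> [linarith [h1.1, h2.2]; linarith [h1.2, h2.1]]
  have hfnn : ∀ ω, (0:ℝ) ≤ |h ω - m ω| := fun ω => abs_nonneg _
  -- integrability
  have hint1 : Integrable (fun ω => |h ω - m ω|) μ := by
    apply Integrable.mono' (integrable_const (1:ℝ)) hfm.aestronglyMeasurable
    filter_upwards with ω
    simpa [abs_abs] using hfb ω
  have hintq : Integrable (fun ω => |h ω - m ω| ^ q) μ := by
    apply Integrable.mono' (integrable_const (1:ℝ))
      (((Real.continuous_rpow_const hq0.le).measurable.comp hfm).aestronglyMeasurable)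
    filter_upwards with ω
    simp only [Function.comp_apply, Real.norm_eq_abs]
    rw [abs_of_nonneg (Real.rpow_nonneg (hfnn ω) _)]
    exact Real.rpow_le_one (hfnn ω) (hfb ω) hq0.le
  have hint2 : Integrable (fun ω => |h ω + ε - m ω|) μ := by
    apply Integrable.mono' (integrable_const (2:ℝ))
      ((hh.add_const ε).sub hm).abs.aestronglyMeasurable
    filter_upwards with ω
    rw [Real.norm_eq_abs, abs_abs]
    have := hfb ω
    calc |h ω + ε - m ω| ≤ |h ω - m ω| + |ε| := by
          have : h ω + ε - m ω = (h ω - m ω) + ε := by ring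
          rw [this]; exact abs_add_le _ _
      _ ≤ 2 := by rw [abs_of_pos hε0]; linarith
  -- Step A: Markov
  have hεq : ε ^ q = σ ^ (q * q / (q + 1)) := by
    rw [hε, ← Real.rpow_mul hσ0.le]
    congr 1
    ring
  have stepA : (μ {ω | h ω + ε < m ω}).toReal ≤ ε := by
    have hsub : {ω | h ω + ε < m ω} ⊆ {ω | ε ^ q ≤ |h ω - m ω| ^ q} := by
      intro ω hω
      simp only [Set.mem_setOf_eq] at hω ⊢
      apply Real.rpow_le_rpow hε0.le _ hq0.le
      have : ε ≤ m ω - h ω := by linarith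
      exact this.trans (le_abs.2 (Or.inr (by linarith)))
    have hmono : μ {ω | h ω + ε < m ω} ≤ μ {ω | ε ^ q ≤ |h ω - m ω| ^ q} :=
      measure_mono hsub
    have hmarkov := mul_meas_ge_le_integral_of_nonneg
      (ae_of_all μ fun ω => Real.rpow_nonneg (hfnn ω) q) hintq (ε ^ q)
    have hεqpos : 0 < ε ^ q := Real.rpow_pos_of_pos hε0 _
    have h1 : (μ {ω | ε ^ q ≤ |h ω - m ω| ^ q}).toReal ≤ σ ^ q / ε ^ q := by
      rw [le_div_iff₀ hεqpos, mul_comm]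
      exact hmarkov.trans hmom
    have h2 : σ ^ q / ε ^ q = ε := by
      rw [hεq, ← Real.rpow_sub hσ0, hε]
      congr 1
      field_simp
      ring
    calc (μ {ω | h ω + ε < m ω}).toReal
        ≤ (μ {ω | ε ^ q ≤ |h ω - m ω| ^ q}).toReal := by
          exact ENNReal.toReal_mono (measure_ne_top μ _) hmono
      _ ≤ σ ^ q / ε ^ q := h1
      _ = ε := h2
  -- Step B: Jensen's inequality, E|h-m| ≤ σ
  have stepB : (∫ ω, |h ω - m ω| ∂μ) ≤ σ := by
    have hconv : ConvexOn ℝ (Set.Ici 0) fun x : ℝ => x ^ q := convexOn_rpow hq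
    have hcont : ContinuousOn (fun x : ℝ => x ^ q) (Set.Ici 0) := by
      intro x hx
      exact (Real.continuousAt_rpow_const x q (Or.inr hq0.le)).continuousWithinAt
    have hjensen := hconv.map_integral_le hcont isClosed_Ici
      (ae_of_all μ fun ω => hfnn ω) hint1 (by exact hintq)
    have hIq : (∫ ω, |h ω - m ω| ∂μ) ^ q ≤ σ ^ q := hjensen.trans hmom
    have hInn : 0 ≤ ∫ ω, |h ω - m ω| ∂μ := integral_nonneg hfnn
    exact (Real.rpow_le_rpow_iff hInn hσ0.le hq0).1 hIq
  -- Step C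
  have stepC : (∫ ω, |h ω + ε - m ω| ∂μ) ≤ σ + ε := by
    have hpt : ∀ ω, |h ω + ε - m ω| ≤ |h ω - m ω| + ε := by
      intro ω
      have : h ω + ε - m ω = (h ω - m ω) + ε := by ring
      rw [this]
      exact (abs_add_le _ _).trans (by rw [abs_of_pos hε0])
    calc (∫ ω, |h ω + ε - m ω| ∂μ) ≤ ∫ ω, (|h ω - m ω| + ε) ∂μ :=
          integral_mono hint2 (hint1.add (integrable_const ε)) hpt
      _ = (∫ ω, |h ω - m ω| ∂μ) + ε := by
          rw [integral_add hint1 (integrable_const ε), integral_const]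
          simp
      _ ≤ σ + ε := by linarith
  linarith
end

section
/- For any n ≥ 1 and any positive real numbers a_1, …, a_n, it holds that Σ_{i=1}^n a_i / √(Σ_{j=1}^i a_j) ≤ 2·√(Σ_{i=1}^n a_i). -/
open Finset

lemma self_norm_aux (f : ℕ → ℝ) :
    ∀ m : ℕ, (∀ k < m, 0 < f k) →
      ∑ i ∈ Finset.range m, f i / Real.sqrt (∑ j ∈ Finset.range (i + 1), f j)
        ≤ 2 * Real.sqrt (∑ i ∈ Finset.range m, f i) := by
  intro m
  induction m with
  | zero => simp
  | succ m ih =>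
    intro hpos
    have hposm : ∀ k < m, 0 < f k := fun k hk => hpos k (Nat.lt_succ_of_lt hk)
    have hS : 0 ≤ ∑ i ∈ Finset.range m, f i :=
      Finset.sum_nonneg fun i hi => (hposm i (Finset.mem_range.mp hi)).le
    set S := ∑ i ∈ Finset.range m, f i with hSdef
    have hfm : 0 < f m := hpos m (Nat.lt_succ_self m)
    have hT : 0 < S + f m := by linarith
    rw [Finset.sum_range_succ, Finset.sum_range_succ (f := f)]
    have hsqS : Real.sqrt S ^ 2 = S := Real.sq_sqrt hS
    have hsqT : Real.sqrt (S + f m) ^ 2 = S + f m := Real.sq_sqrt hT.le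
    have hsT : 0 < Real.sqrt (S + f m) := Real.sqrt_pos.mpr hT
    have hsS : 0 ≤ Real.sqrt S := Real.sqrt_nonneg S
    have key : f m / Real.sqrt (S + f m) ≤
        2 * Real.sqrt (S + f m) - 2 * Real.sqrt S := by
      rw [div_le_iff₀ hsT]
      nlinarith [sq_nonneg (Real.sqrt (S + f m) - Real.sqrt S)]
    have := ih hposm
    linarith

/-- Self-normalized sum inequality: for positive reals `a_1, …, a_n`,
`Σ_{i=1}^n a_i / √(Σ_{j≤i} a_j) ≤ 2·√(Σ_{i=1}^n a_i)`. -/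
theorem self_normalized_sum (n : ℕ) (hn : 1 ≤ n) (a : Fin n → ℝ) (ha : ∀ i, 0 < a i) :
    (∑ i : Fin n,
        a i / Real.sqrt (∑ j ∈ Finset.univ.filter (fun j => j ≤ i), a j))
      ≤ 2 * Real.sqrt (∑ i : Fin n, a i) := by
  set f : ℕ → ℝ := fun k => if h : k < n then a ⟨k, h⟩ else 1 with hf
  have hconv : ∀ i : Fin n,
      (∑ j ∈ Finset.univ.filter (fun j => j ≤ i), a j)
        = ∑ j ∈ Finset.range (i.val + 1), f j := by
    intro i
    rw [Finset.sum_filter]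
    have h1 : ∀ j : Fin n,
        (if j ≤ i then a j else 0) = (fun k => if k ≤ (i : ℕ) then f k else 0) j.val := by
      intro j
      simp only [hf, Fin.le_def]
      rw [dif_pos j.isLt]
    rw [Finset.sum_congr rfl (fun j _ => h1 j),
      Fin.sum_univ_eq_sum_range (fun k => if k ≤ (i : ℕ) then f k else 0) n,
      ← Finset.sum_filter]
    congr 1
    ext k
    simp only [Finset.mem_filter, Finset.mem_range, Nat.lt_succ_iff]
    have := i.isLt
    omega
  have hconv2 : (∑ i : Fin n, a i) = ∑ i ∈ Finset.range n, f i := by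
    rw [← Fin.sum_univ_eq_sum_range (fun k => f k) n]
    apply Finset.sum_congr rfl
    intro j _
    simp only [hf]
    rw [dif_pos j.isLt]
  calc (∑ i : Fin n,
        a i / Real.sqrt (∑ j ∈ Finset.univ.filter (fun j => j ≤ i), a j))
      = ∑ i ∈ Finset.range n, f i / Real.sqrt (∑ j ∈ Finset.range (i + 1), f j) := by
        rw [← Fin.sum_univ_eq_sum_range (fun k => f k / Real.sqrt (∑ j ∈ Finset.range (k + 1), f j)) n]
        apply Finset.sum_congr rfl
        intro j _
        simp only [hconv j]
        congr 1
        simp only [hf]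
        rw [dif_pos j.isLt]
    _ ≤ 2 * Real.sqrt (∑ i ∈ Finset.range n, f i) :=
        self_norm_aux f n (fun k hk => by simpa [hf, hk] using ha ⟨k, hk⟩)
    _ = 2 * Real.sqrt (∑ i : Fin n, a i) := by rw [hconv2]
end

section
/- Let a, b, δ be real numbers with 0 < δ < a and 0 < δ < b. Then 2(a + δ)·ln((a + δ)/(a − δ)) + 2(b − δ)·ln((b − δ)/(b + δ)) ≤ 8·δ²·(a + b) / ((a − δ)·(b + δ)). -/
/-- KL-divergence bound for the Le Cam two-point construction: for
`0 < δ < a` and `0 < δ < b`,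
`2(a+δ)·ln((a+δ)/(a−δ)) + 2(b−δ)·ln((b−δ)/(b+δ)) ≤ 8δ²(a+b)/((a−δ)(b+δ))`. -/
theorem lecam_kl_bound (a b δ : ℝ) (hδ : 0 < δ) (ha : δ < a) (hb : δ < b) :
    2 * (a + δ) * Real.log ((a + δ) / (a - δ))
      + 2 * (b - δ) * Real.log ((b - δ) / (b + δ))
      ≤ 8 * δ ^ 2 * (a + b) / ((a - δ) * (b + δ)) := by
  have ha' : 0 < a - δ := by linarith
  have hb' : 0 < b + δ := by linarith
  have h1 : Real.log ((a + δ) / (a - δ)) ≤ (a + δ) / (a - δ) - 1 :=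
    Real.log_le_sub_one_of_pos (div_pos (by linarith) (by linarith))
  have h2 : Real.log ((b - δ) / (b + δ)) ≤ (b - δ) / (b + δ) - 1 :=
    Real.log_le_sub_one_of_pos (div_pos (by linarith) (by linarith))
  have key : 2 * (a + δ) * ((a + δ) / (a - δ) - 1)
      + 2 * (b - δ) * ((b - δ) / (b + δ) - 1)
      = 8 * δ ^ 2 * (a + b) / ((a - δ) * (b + δ)) := by
    field_simp
    ring
  calc 2 * (a + δ) * Real.log ((a + δ) / (a - δ))
      + 2 * (b - δ) * Real.log ((b - δ) / (b + δ))
      ≤ 2 * (a + δ) * ((a + δ) / (a - δ) - 1)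
      + 2 * (b - δ) * ((b - δ) / (b + δ) - 1) := by
        gcongr <;> linarith
    _ = _ := key
end

section
/- Let δ and ε be real numbers with 0 < δ < ε ≤ 1/8. Then 2(ε − δ)·ln((ε − δ)/(ε + δ)) + (1 − 2(ε − δ))·ln((1 − 2(ε − δ))/(1 − 2(ε + δ))) ≤ 16·δ²/ε. In particular, the Kullback–Leibler divergence between the Bernoulli distribution with success probability 2(ε − δ) and the Bernoulli distribution with success probability 2(ε + δ) is at most 16·δ²/ε. -/
/-- KL divergence between `Bernoulli(2(ε−δ))` and `Bernoulli(2(ε+δ))`: for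
`0 < δ < ε ≤ 1/8`,
`2(ε−δ)·ln((ε−δ)/(ε+δ)) + (1−2(ε−δ))·ln((1−2(ε−δ))/(1−2(ε+δ))) ≤ 16δ²/ε`. -/
theorem bernoulli_kl_bound (δ ε : ℝ) (hδ : 0 < δ) (hδε : δ < ε) (hε : ε ≤ 1 / 8) :
    2 * (ε - δ) * Real.log ((ε - δ) / (ε + δ))
      + (1 - 2 * (ε - δ)) * Real.log ((1 - 2 * (ε - δ)) / (1 - 2 * (ε + δ)))
      ≤ 16 * δ ^ 2 / ε := by
  have h1 : 0 < ε - δ := by linarith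
  have h2 : 0 < ε + δ := by linarith
  have h3 : 0 < 1 - 2 * (ε + δ) := by linarith
  have h4 : 0 < 1 - 2 * (ε - δ) := by linarith
  have la : Real.log ((ε - δ) / (ε + δ)) ≤ (ε - δ) / (ε + δ) - 1 :=
    Real.log_le_sub_one_of_pos (by positivity)
  have lb : Real.log ((1 - 2 * (ε - δ)) / (1 - 2 * (ε + δ)))
      ≤ (1 - 2 * (ε - δ)) / (1 - 2 * (ε + δ)) - 1 :=
    Real.log_le_sub_one_of_pos (by positivity)
  have step : 2 * (ε - δ) * Real.log ((ε - δ) / (ε + δ))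
      + (1 - 2 * (ε - δ)) * Real.log ((1 - 2 * (ε - δ)) / (1 - 2 * (ε + δ)))
      ≤ 2 * (ε - δ) * ((ε - δ) / (ε + δ) - 1)
        + (1 - 2 * (ε - δ)) * ((1 - 2 * (ε - δ)) / (1 - 2 * (ε + δ)) - 1) := by
    gcongr
  refine step.trans ?_
  have eq : 2 * (ε - δ) * ((ε - δ) / (ε + δ) - 1)
      + (1 - 2 * (ε - δ)) * ((1 - 2 * (ε - δ)) / (1 - 2 * (ε + δ)) - 1)
      = 16 * δ ^ 2 / ((2 * (ε + δ)) * (1 - 2 * (ε + δ))) := by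
    field_simp
    ring
  rw [eq]
  apply div_le_div_of_nonneg_left (by positivity) (by linarith)
  nlinarith
end
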